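/- arXiv:1006.2275 — 2 statements merged into one kernel-verified Lean document; each statement's English description precedes it below -/
import Mathlib

section
/- Let α, N, k be natural numbers and let 𝔄 = (g_1,…,g_k) be a multiple colligation of size (α,N,k) in which every g_j is a unitary matrix. Let S be an invertible k×k matrix such that both S̃ − d̃ and T̃ − d̃ are invertible, where T = (S*)⁻¹. Then the following Riemann–Schwarz type identity holds: χ(𝔄; (S*)⁻¹) · (χ(𝔄; S))* = 1, i.e. χ(𝔄; (S*)⁻¹) is the inverse of the conjugate transpose of χ(𝔄; S). -/
open Matrix

/-- Block-diagonal matrix `ã` of the `a`-blocks of a multiple colligation. -/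
noncomputable def aT {k : ℕ} {A I : Type*} [DecidableEq (Fin k)]
    (g : Fin k → Matrix (A ⊕ I) (A ⊕ I) ℂ) : Matrix (A × Fin k) (A × Fin k) ℂ :=
  blockDiagonal fun j => (g j).toBlocks₁₁

/-- Block-diagonal matrix `b̃` of the `b`-blocks of a multiple colligation. -/
noncomputable def bT {k : ℕ} {A I : Type*}
    (g : Fin k → Matrix (A ⊕ I) (A ⊕ I) ℂ) : Matrix (A × Fin k) (I × Fin k) ℂ :=
  blockDiagonal fun j => (g j).toBlocks₁₂

/-- Block-diagonal matrix `c̃` of the `c`-blocks of a multiple colligation. -/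
noncomputable def cT {k : ℕ} {A I : Type*}
    (g : Fin k → Matrix (A ⊕ I) (A ⊕ I) ℂ) : Matrix (I × Fin k) (A × Fin k) ℂ :=
  blockDiagonal fun j => (g j).toBlocks₂₁

/-- Block-diagonal matrix `d̃` of the `d`-blocks of a multiple colligation. -/
noncomputable def dT {k : ℕ} {A I : Type*}
    (g : Fin k → Matrix (A ⊕ I) (A ⊕ I) ℂ) : Matrix (I × Fin k) (I × Fin k) ℂ :=
  blockDiagonal fun j => (g j).toBlocks₂₂

/-- `S̃`: the Kronecker-type block matrix whose `(i,j)` block is `s_{ij} · 1`. -/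
def sT {k : ℕ} (I : Type*) [DecidableEq I] (S : Matrix (Fin k) (Fin k) ℂ) :
    Matrix (I × Fin k) (I × Fin k) ℂ :=
  Matrix.of fun p q => if p.1 = q.1 then S p.2 q.2 else 0

/-- The multivariate characteristic function `χ(𝔄; S) = ã + b̃·(S̃ − d̃)⁻¹·c̃`. -/
noncomputable def chiM {k : ℕ} {A I : Type*} [Fintype A] [Fintype I] [DecidableEq I]
    (g : Fin k → Matrix (A ⊕ I) (A ⊕ I) ℂ) (S : Matrix (Fin k) (Fin k) ℂ) :
    Matrix (A × Fin k) (A × Fin k) ℂ :=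
  aT g + bT g * (sT I S - dT g)⁻¹ * cT g

/-!
Put `X = (T̃ - d̃)⁻¹` and `Y = ((S̃ - d̃)ᴴ)⁻¹`. The relations expressing that the rows of the
colligation matrix `[[ã, b̃], [c̃, d̃]]` are orthonormal turn `χ(T) χ(S)ᴴ - 1` into
`b̃ (X (1 - d̃ d̃ᴴ) Y - 1 - d̃ᴴ Y - X d̃) b̃ᴴ`, and the bracket vanishes because `T̃ S̃ᴴ = 1` gives
`1 - d̃ d̃ᴴ = (T̃ - d̃)(S̃ - d̃)ᴴ + (T̃ - d̃) d̃ᴴ + d̃ (S̃ - d̃)ᴴ`. The colligation matrix is unitary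
since, up to a permutation of indices, it is the block-diagonal matrix of the unitaries `g_j`.
-/

theorem mul_one_sub_mul_mul_eq_of_mul_eq_one {R : Type*} [Ring R] {d d' T S' X Y : R}
    (hTS : T * S' = 1) (hX : X * (T - d) = 1) (hY : (S' - d') * Y = 1) :
    X * (1 - d * d') * Y = 1 + d' * Y + X * d := by
  have hsplit : 1 - d * d' = (T - d) * (S' - d') + (T - d) * d' + d * (S' - d') := by
    rw [← hTS]; noncomm_ring
  calc X * (1 - d * d') * Y
      = X * (T - d) * ((S' - d') * Y) + X * (T - d) * d' * Y + X * d * ((S' - d') * Y) := by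
        rw [hsplit]; noncomm_ring
    _ = 1 + d' * Y + X * d := by rw [hX, hY]; noncomm_ring

namespace Matrix

variable {R : Type*} [CommRing R] [StarRing R] {m n : Type*} [Fintype m] [Fintype n]
  [DecidableEq m] [DecidableEq n]

theorem fromBlocks_mul_conjTranspose_eq_one_iff (a : Matrix m m R) (b : Matrix m n R)
    (c : Matrix n m R) (d : Matrix n n R) :
    fromBlocks a b c d * (fromBlocks a b c d)ᴴ = 1 ↔
      a * aᴴ + b * bᴴ = 1 ∧ a * cᴴ + b * dᴴ = 0 ∧ c * aᴴ + d * bᴴ = 0 ∧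
        c * cᴴ + d * dᴴ = 1 := by
  rw [fromBlocks_conjTranspose, fromBlocks_multiply, ← fromBlocks_one, fromBlocks_inj]

noncomputable def colligationChar (a : Matrix m m R) (b : Matrix m n R) (c : Matrix n m R)
    (d Z : Matrix n n R) : Matrix m m R :=
  a + b * (Z - d)⁻¹ * c

theorem colligationChar_mul_conjTranspose_eq_one {a : Matrix m m R} {b : Matrix m n R}
    {c : Matrix n m R} {d : Matrix n n R} (hU : fromBlocks a b c d * (fromBlocks a b c d)ᴴ = 1)
    {S T : Matrix n n R} (hTS : T * Sᴴ = 1) (hT : IsUnit (T - d)) (hS : IsUnit (S - d)) :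
    colligationChar a b c d T * (colligationChar a b c d S)ᴴ = 1 := by
  obtain ⟨haa, hac, hca, hcc⟩ := (fromBlocks_mul_conjTranspose_eq_one_iff a b c d).mp hU
  set X := (T - d)⁻¹
  set Y := (S - d)ᴴ⁻¹
  have hX : X * (T - d) = 1 := nonsing_inv_mul _ ((isUnit_iff_isUnit_det _).mp hT)
  have hY : (Sᴴ - dᴴ) * Y = 1 := by
    rw [← conjTranspose_sub]
    exact mul_nonsing_inv _ ((isUnit_iff_isUnit_det _).mp hS.star)
  have key := mul_one_sub_mul_mul_eq_of_mul_eq_one hTS hX hY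
  have hχS : (colligationChar a b c d S)ᴴ = aᴴ + cᴴ * Y * bᴴ := by
    simp only [colligationChar, conjTranspose_add, conjTranspose_mul, conjTranspose_nonsing_inv,
      Matrix.mul_assoc, Y]
  calc colligationChar a b c d T * (colligationChar a b c d S)ᴴ
      = a * aᴴ + a * cᴴ * Y * bᴴ + b * X * (c * aᴴ) + b * X * (c * cᴴ) * Y * bᴴ := by
        rw [hχS]
        simp only [colligationChar, Matrix.add_mul, Matrix.mul_add, Matrix.mul_assoc, X]
        abel
    _ = (1 - b * bᴴ) + -(b * dᴴ) * Y * bᴴ + b * X * -(d * bᴴ) + b * X * (1 - d * dᴴ) * Y * bᴴ := by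
        rw [eq_sub_of_add_eq haa, eq_neg_of_add_eq_zero_left hac, eq_neg_of_add_eq_zero_left hca,
          eq_sub_of_add_eq hcc]
    _ = 1 + b * (X * (1 - d * dᴴ) * Y - (1 + dᴴ * Y + X * d)) * bᴴ := by
        simp only [Matrix.mul_sub, Matrix.sub_mul, Matrix.mul_add, Matrix.add_mul, Matrix.mul_neg,
          Matrix.neg_mul, Matrix.mul_one, Matrix.mul_assoc]
        abel
    _ = 1 := by rw [key, sub_self, Matrix.mul_zero, Matrix.zero_mul, add_zero]

end Matrix

section sT

variable {k : ℕ} (I : Type*) [DecidableEq I]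

open Kronecker in
theorem sT_eq_one_kronecker (S : Matrix (Fin k) (Fin k) ℂ) : sT I S = (1 : Matrix I I ℂ) ⊗ₖ S := by
  ext ⟨i, p⟩ ⟨j, q⟩
  simp [sT, kroneckerMap_apply, one_apply]

theorem sT_one : sT I (1 : Matrix (Fin k) (Fin k) ℂ) = 1 := by
  rw [sT_eq_one_kronecker, one_kronecker_one]

theorem sT_mul [Fintype I] (S T : Matrix (Fin k) (Fin k) ℂ) : sT I (S * T) = sT I S * sT I T := by
  rw [sT_eq_one_kronecker, sT_eq_one_kronecker, sT_eq_one_kronecker, ← mul_kronecker_mul,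
    Matrix.one_mul]

theorem sT_conjTranspose (S : Matrix (Fin k) (Fin k) ℂ) : sT I Sᴴ = (sT I S)ᴴ := by
  rw [sT_eq_one_kronecker, sT_eq_one_kronecker, conjTranspose_kronecker, conjTranspose_one]

end sT

theorem fromBlocks_aT_bT_cT_dT {k : ℕ} {A I : Type*} (g : Fin k → Matrix (A ⊕ I) (A ⊕ I) ℂ) :
    fromBlocks (aT g) (bT g) (cT g) (dT g) =
      (blockDiagonal g).submatrix (Equiv.sumProdDistrib A I (Fin k)).symm
        (Equiv.sumProdDistrib A I (Fin k)).symm := by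
  ext (⟨a, i⟩ | ⟨a, i⟩) (⟨b, j⟩ | ⟨b, j⟩) <;>
    simp [aT, bT, cT, dT, blockDiagonal_apply, toBlocks₁₁, toBlocks₁₂, toBlocks₂₁, toBlocks₂₂]

theorem fromBlocks_aT_bT_cT_dT_mul_conjTranspose {k : ℕ} {A I : Type*} [Fintype A] [Fintype I]
    [DecidableEq A] [DecidableEq I] {g : Fin k → Matrix (A ⊕ I) (A ⊕ I) ℂ}
    (hg : ∀ j, g j ∈ unitaryGroup (A ⊕ I) ℂ) :
    fromBlocks (aT g) (bT g) (cT g) (dT g) * (fromBlocks (aT g) (bT g) (cT g) (dT g))ᴴ = 1 := by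
  have hblock : blockDiagonal g * (blockDiagonal g)ᴴ = 1 := by
    rw [blockDiagonal_conjTranspose, ← blockDiagonal_mul, ← blockDiagonal_one]
    exact congrArg blockDiagonal (funext fun j => mem_unitaryGroup_iff.mp (hg j))
  rw [fromBlocks_aT_bT_cT_dT, conjTranspose_submatrix, submatrix_mul_equiv, hblock,
    submatrix_one_equiv]

/-- the Riemann–Schwarz type identity for the multivariate characteristic
function of a multiple colligation of unitary matrices:
`χ(𝔄; (S*)⁻¹) · χ(𝔄; S)* = 1`. -/
theorem chiM_schwarz {α N k : ℕ}
    (g : Fin k → Matrix (Fin α ⊕ Fin N) (Fin α ⊕ Fin N) ℂ)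
    (hg : ∀ j, g j ∈ Matrix.unitaryGroup (Fin α ⊕ Fin N) ℂ)
    (S : Matrix (Fin k) (Fin k) ℂ) (hS : IsUnit S)
    (hinv : IsUnit (sT (Fin N) S - dT g))
    (hinv' : IsUnit (sT (Fin N) (Sᴴ)⁻¹ - dT g)) :
    chiM g ((Sᴴ)⁻¹) * (chiM g S)ᴴ = 1 := by
  have hTS : sT (Fin N) (Sᴴ)⁻¹ * (sT (Fin N) S)ᴴ = 1 := by
    have hSH : IsUnit Sᴴ := hS.star
    rw [← sT_conjTranspose, ← sT_mul, nonsing_inv_mul _ ((isUnit_iff_isUnit_det _).mp hSH), sT_one]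
  exact colligationChar_mul_conjTranspose_eq_one (fromBlocks_aT_bT_cT_dT_mul_conjTranspose hg) hTS
    hinv' hinv
end

section
/- Let α, N, k be natural numbers and let 𝔄 = (g_1,…,g_k) be a family of invertible (α+N)×(α+N) complex matrices. Let S, R be k×k matrices such that both E(𝔄; S, R) and E(𝔄; Sᵗ, Rᵗ) are invertible. Let J_s be the (2kα)×(2kα) block matrix [[0, 1_{kα}],[−1_{kα}, 0]], and for a (2kα)×(2kα) matrix X define X^△ = J_s⁻¹ · Xᵗ · J_s (the transpose with respect to the skew-symmetric bilinear form Λ(p,p̃) = Σ_j ((p_j⁺, p̃_j⁻) − (p_j⁻, p̃_j⁺)), where (·,·) is the standard bilinear form). Then χ(𝔄; Sᵗ, Rᵗ) · (χ(𝔄; S, R))^△ = 1, i.e. χ(𝔄; Sᵗ, Rᵗ) = (χ(𝔄; S, R)^△)⁻¹. In particular, if S and R are symmetric matrices, then χ(𝔄; S, R)ᵗ · J_s · χ(𝔄; S, R) = J_s, i.e. χ(𝔄; S, R) belongs to the complex symplectic group Sp(2kα, ℂ). -/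
/-!
`χ(𝔄; S, R)` is the transfer map of a closed loop. With internal state
`u = E⁻¹(S̃c̃'p⁻ − c̃p⁺)` (`chi2vState`), the colligation `g̃` sends `(p⁺, u)` to `(q⁺, v)`,
`g̃' = (g̃ᵀ)⁻¹` sends `(p⁻, R̃u)` to `(q⁻, v')`, and the loop is closed by `v = S̃v'`.
Because `g̃'` is the inverse transpose of `g̃`, the pair preserves the standard pairing, so for a
second loop `p̃ ↦ q̃` built from `(Sᵀ, Rᵀ)`
`Λ(q, q̃) − Λ(p, p̃) = (u, ũ') − (ũ, u') − (v, ṽ') + (ṽ, v')`.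
The couplings `ũ' = R̃ᵀũ` and `ṽ = S̃ᵀṽ'` make the right-hand side vanish, i.e.
`χ(S, R)ᵀ J_s χ(Sᵀ, Rᵀ) = J_s`, and both claims follow.
-/

open Matrix

/-- The family of inverse-transpose matrices `g_j' = (g_jᵗ)⁻¹`. -/
noncomputable def gP {k : ℕ} {A I : Type*} [Fintype A] [Fintype I]
    [DecidableEq A] [DecidableEq I]
    (g : Fin k → Matrix (A ⊕ I) (A ⊕ I) ℂ) : Fin k → Matrix (A ⊕ I) (A ⊕ I) ℂ :=
  fun j => ((g j)ᵀ)⁻¹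

/-- `E(𝔄; S, R) = d̃ − S̃·d̃'·R̃`, where `d̃'` is the block-diagonal matrix of the
`d`-blocks of the inverse transposes `(g_jᵗ)⁻¹`. -/
noncomputable def EMat {k : ℕ} {A I : Type*} [Fintype A] [Fintype I]
    [DecidableEq A] [DecidableEq I]
    (g : Fin k → Matrix (A ⊕ I) (A ⊕ I) ℂ) (S R : Matrix (Fin k) (Fin k) ℂ) :
    Matrix (I × Fin k) (I × Fin k) ℂ :=
  dT g - sT I S * dT (gP g) * sT I R

/-- The two-variable characteristic function `χ(𝔄; S, R)`, a `2 × 2` block matrix with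
blocks of size `kα`:
`[[ã − b̃·E⁻¹·c̃, b̃·E⁻¹·S̃·c̃'], [−b̃'·R̃·E⁻¹·c̃, ã' + b̃'·R̃·E⁻¹·S̃·c̃']]`. -/
noncomputable def chi2v {k : ℕ} {A I : Type*} [Fintype A] [Fintype I]
    [DecidableEq A] [DecidableEq I]
    (g : Fin k → Matrix (A ⊕ I) (A ⊕ I) ℂ) (S R : Matrix (Fin k) (Fin k) ℂ) :
    Matrix ((A × Fin k) ⊕ (A × Fin k)) ((A × Fin k) ⊕ (A × Fin k)) ℂ :=
  fromBlocks
    (aT g - bT g * (EMat g S R)⁻¹ * cT g)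
    (bT g * (EMat g S R)⁻¹ * sT I S * cT (gP g))
    (-(bT (gP g) * sT I R * (EMat g S R)⁻¹ * cT g))
    (aT (gP g) + bT (gP g) * sT I R * (EMat g S R)⁻¹ * sT I S * cT (gP g))

section Colligation

variable {K P Q n : Type*} [CommRing K] [Fintype P] [Fintype Q] [DecidableEq P] [DecidableEq Q]

theorem transpose_mul_add_transpose_mul_of_fromBlocks
    {a a' : Matrix P P K} {b b' : Matrix P Q K}
    {c c' : Matrix Q P K} {d d' : Matrix Q Q K}
    (hG : (fromBlocks a b c d)ᵀ * fromBlocks a' b' c' d' = 1)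
    (x₁ y₁ : Matrix P n K) (x₂ y₂ : Matrix Q n K) :
    (a * x₁ + b * x₂)ᵀ * (a' * y₁ + b' * y₂) + (c * x₁ + d * x₂)ᵀ * (c' * y₁ + d' * y₂)
      = x₁ᵀ * y₁ + x₂ᵀ * y₂ := by
  calc _ = (fromBlocks a b c d * fromRows x₁ x₂)ᵀ * (fromBlocks a' b' c' d' * fromRows y₁ y₂) := by
        rw [fromBlocks_mul_fromRows, fromBlocks_mul_fromRows, transpose_fromRows,
          fromCols_mul_fromRows]
    _ = (fromRows x₁ x₂)ᵀ * ((fromBlocks a b c d)ᵀ * fromBlocks a' b' c' d') * fromRows y₁ y₂ := by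
        rw [transpose_mul, Matrix.mul_assoc, Matrix.mul_assoc, Matrix.mul_assoc]
    _ = _ := by rw [hG, Matrix.mul_one, transpose_fromRows, fromCols_mul_fromRows]

theorem fromRows_transpose_mul_J_mul_fromRows (x₁ x₂ y₁ y₂ : Matrix P n K) :
    (fromRows x₁ x₂)ᵀ * (fromBlocks 0 1 (-1) 0 : Matrix (P ⊕ P) (P ⊕ P) K) * fromRows y₁ y₂
      = x₁ᵀ * y₂ - (y₁ᵀ * x₂)ᵀ := by
  rw [transpose_fromRows, fromCols_mul_fromBlocks, fromCols_mul_fromRows, transpose_mul,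
    transpose_transpose]
  simp only [Matrix.mul_zero, Matrix.mul_one, Matrix.mul_neg, zero_add, add_zero, Matrix.neg_mul]
  abel

theorem fromCols_add_fromCols {m n₁ n₂ : Type*} (A₁ A₂ : Matrix m n₁ K) (B₁ B₂ : Matrix m n₂ K) :
    fromCols A₁ B₁ + fromCols A₂ B₂ = fromCols (A₁ + A₂) (B₁ + B₂) := by
  ext i (j | j) <;> rfl

theorem isUnit_det_fromBlocks_zero_one_neg_one :
    IsUnit (fromBlocks 0 1 (-1) 0 : Matrix (P ⊕ P) (P ⊕ P) K).det :=
  (isUnit_iff_isUnit_det _).mp <| IsUnit.of_mul_eq_one (fromBlocks 0 (-1) 1 0) <| by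
    simp [fromBlocks_multiply]

variable (K P) in
def plusPart : Matrix P (P ⊕ P) K := fromCols 1 0

variable (K P) in
def minusPart : Matrix P (P ⊕ P) K := fromCols 0 1

theorem mul_plusPart (M : Matrix n P K) : M * plusPart K P = fromCols M 0 := by
  rw [plusPart, mul_fromCols, Matrix.mul_one, Matrix.mul_zero]

theorem mul_minusPart (M : Matrix n P K) : M * minusPart K P = fromCols 0 M := by
  rw [minusPart, mul_fromCols, Matrix.mul_one, Matrix.mul_zero]

theorem plusPart_transpose_mul_minusPart_sub :
    (plusPart K P)ᵀ * minusPart K P - ((plusPart K P)ᵀ * minusPart K P)ᵀ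
      = fromBlocks 0 1 (-1) 0 := by
  rw [plusPart, minusPart, transpose_fromCols, fromRows_mul_fromCols, fromBlocks_transpose,
    sub_eq_add_neg, fromBlocks_neg, fromBlocks_add]
  simp

theorem closedLoop_transpose_mul_J_mul {a a' : Matrix P P K} {b b' : Matrix P Q K}
    {c c' : Matrix Q P K} {d d' : Matrix Q Q K}
    (hG : (fromBlocks a b c d)ᵀ * fromBlocks a' b' c' d' = 1) {σ ρ : Matrix Q Q K}
    {U Ũ : Matrix Q (P ⊕ P) K}
    (hU : c * plusPart K P + d * U = σ * (c' * minusPart K P + d' * (ρ * U)))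
    (hŨ : c * plusPart K P + d * Ũ = σᵀ * (c' * minusPart K P + d' * (ρᵀ * Ũ))) :
    (fromRows (a * plusPart K P + b * U) (a' * minusPart K P + b' * (ρ * U)))ᵀ
        * (fromBlocks 0 1 (-1) 0 : Matrix (P ⊕ P) (P ⊕ P) K)
        * fromRows (a * plusPart K P + b * Ũ) (a' * minusPart K P + b' * (ρᵀ * Ũ))
      = fromBlocks 0 1 (-1) 0 := by
  have hXY := transpose_mul_add_transpose_mul_of_fromBlocks hG
    (plusPart K P) (minusPart K P) U (ρᵀ * Ũ)
  have hYX := transpose_mul_add_transpose_mul_of_fromBlocks hG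
    (plusPart K P) (minusPart K P) Ũ (ρ * U)
  rw [hU] at hXY
  rw [hŨ] at hYX
  rw [fromRows_transpose_mul_J_mul_fromRows, eq_sub_of_add_eq hXY, eq_sub_of_add_eq hYX,
    ← plusPart_transpose_mul_minusPart_sub]
  simp only [transpose_sub, transpose_add, transpose_mul, transpose_transpose, Matrix.mul_assoc]
  abel

end Colligation

section Chi2v

variable {k : ℕ} {A I : Type*}

theorem fromBlocks_aT_bT_cT_dT_eq_submatrix (g : Fin k → Matrix (A ⊕ I) (A ⊕ I) ℂ) :
    fromBlocks (aT g) (bT g) (cT g) (dT g)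
      = (blockDiagonal g).submatrix (Equiv.sumProdDistrib A I (Fin k)).symm
          (Equiv.sumProdDistrib A I (Fin k)).symm := by
  ext (⟨i, j⟩ | ⟨i, j⟩) (⟨i', j'⟩ | ⟨i', j'⟩) <;>
    simp [aT, bT, cT, dT, blockDiagonal_apply, toBlocks₁₁, toBlocks₁₂, toBlocks₂₁, toBlocks₂₂]

variable [DecidableEq I]

theorem sT_transpose (S : Matrix (Fin k) (Fin k) ℂ) : (sT I S)ᵀ = sT I Sᵀ := by
  ext ⟨p, i⟩ ⟨q, j⟩
  simp only [sT, transpose_apply, of_apply, eq_comm]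

variable [Fintype A] [Fintype I] [DecidableEq A]

theorem fromBlocks_transpose_mul_fromBlocks_gP {g : Fin k → Matrix (A ⊕ I) (A ⊕ I) ℂ}
    (hg : ∀ j, IsUnit (g j)) :
    (fromBlocks (aT g) (bT g) (cT g) (dT g))ᵀ
        * fromBlocks (aT (gP g)) (bT (gP g)) (cT (gP g)) (dT (gP g)) = 1 := by
  have hblock : (fun j => (g j)ᵀ * gP g j) = 1 := funext fun j =>
    mul_nonsing_inv _ ((isUnit_iff_isUnit_det _).mp ((isUnit_transpose _).mpr (hg j)))
  rw [fromBlocks_aT_bT_cT_dT_eq_submatrix, fromBlocks_aT_bT_cT_dT_eq_submatrix,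
    transpose_submatrix, submatrix_mul_equiv, blockDiagonal_transpose, ← blockDiagonal_mul,
    hblock, blockDiagonal_one, submatrix_one_equiv]

noncomputable def chi2vState (g : Fin k → Matrix (A ⊕ I) (A ⊕ I) ℂ)
    (S R : Matrix (Fin k) (Fin k) ℂ) :
    Matrix (I × Fin k) ((A × Fin k) ⊕ (A × Fin k)) ℂ :=
  (EMat g S R)⁻¹ * fromCols (-cT g) (sT I S * cT (gP g))

theorem chi2v_eq_fromRows (g : Fin k → Matrix (A ⊕ I) (A ⊕ I) ℂ)
    (S R : Matrix (Fin k) (Fin k) ℂ) :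
    chi2v g S R
      = fromRows (aT g * plusPart ℂ (A × Fin k) + bT g * chi2vState g S R)
          (aT (gP g) * minusPart ℂ (A × Fin k) + bT (gP g) * (sT I R * chi2vState g S R)) := by
  simp only [chi2v, chi2vState, mul_plusPart, mul_minusPart, mul_fromCols, ← Matrix.mul_assoc,
    fromCols_add_fromCols, ← fromRows_fromCols_eq_fromBlocks, Matrix.mul_neg, zero_add,
    ← sub_eq_add_neg, zero_sub]

theorem chi2vState_loop {g : Fin k → Matrix (A ⊕ I) (A ⊕ I) ℂ} {S R : Matrix (Fin k) (Fin k) ℂ}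
    (hE : IsUnit (EMat g S R)) :
    cT g * plusPart ℂ (A × Fin k) + dT g * chi2vState g S R
      = sT I S
          * (cT (gP g) * minusPart ℂ (A × Fin k) + dT (gP g) * (sT I R * chi2vState g S R)) := by
  have hEU : EMat g S R * chi2vState g S R = fromCols (-cT g) (sT I S * cT (gP g)) := by
    rw [chi2vState, ← Matrix.mul_assoc, mul_nonsing_inv _ ((isUnit_iff_isUnit_det _).mp hE),
      Matrix.one_mul]
  rw [← sub_eq_zero]
  calc _ = cT g * plusPart ℂ (A × Fin k) - sT I S * cT (gP g) * minusPart ℂ (A × Fin k)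
        + EMat g S R * chi2vState g S R := by
          simp only [EMat, Matrix.sub_mul, Matrix.mul_add, Matrix.mul_assoc]
          abel
    _ = 0 := by
      rw [hEU, mul_plusPart, mul_minusPart]
      ext i (j | j) <;> simp

theorem chi2v_transpose_mul_J_mul {g : Fin k → Matrix (A ⊕ I) (A ⊕ I) ℂ}
    (hg : ∀ j, IsUnit (g j)) {S R : Matrix (Fin k) (Fin k) ℂ}
    (hE : IsUnit (EMat g S R)) (hE' : IsUnit (EMat g Sᵀ Rᵀ)) :
    (chi2v g S R)ᵀ * (fromBlocks 0 1 (-1) 0 : Matrix ((A × Fin k) ⊕ (A × Fin k)) _ ℂ)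
        * chi2v g Sᵀ Rᵀ = fromBlocks 0 1 (-1) 0 := by
  have hloop' := chi2vState_loop hE'
  rw [← sT_transpose, ← sT_transpose] at hloop'
  rw [chi2v_eq_fromRows, chi2v_eq_fromRows, ← sT_transpose]
  exact closedLoop_transpose_mul_J_mul (fromBlocks_transpose_mul_fromBlocks_gP hg)
    (chi2vState_loop hE) hloop'

end Chi2v

/-- the skew-symmetric (symplectic) Riemann–Schwarz type identity for the
two-variable characteristic function: with `J_s = [[0, 1],[−1, 0]]` and
`X^△ = J_s⁻¹·Xᵗ·J_s`, one has `χ(𝔄; Sᵗ, Rᵗ) · (χ(𝔄; S, R))^△ = 1`. In particular,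
if `S` and `R` are symmetric then `χ(𝔄; S, R)` lies in the complex symplectic group:
`χᵗ · J_s · χ = J_s`. -/
theorem chi2v_symplectic {α N k : ℕ}
    (g : Fin k → Matrix (Fin α ⊕ Fin N) (Fin α ⊕ Fin N) ℂ)
    (hg : ∀ j, IsUnit (g j))
    (S R : Matrix (Fin k) (Fin k) ℂ)
    (hE : IsUnit (EMat g S R)) (hE' : IsUnit (EMat g Sᵀ Rᵀ)) :
    chi2v g Sᵀ Rᵀ
        * ((fromBlocks 0 (1 : Matrix (Fin α × Fin k) (Fin α × Fin k) ℂ) (-1) 0)⁻¹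
            * (chi2v g S R)ᵀ
            * fromBlocks 0 (1 : Matrix (Fin α × Fin k) (Fin α × Fin k) ℂ) (-1) 0)
      = 1 ∧
    (Sᵀ = S → Rᵀ = R →
      (chi2v g S R)ᵀ
          * fromBlocks 0 (1 : Matrix (Fin α × Fin k) (Fin α × Fin k) ℂ) (-1) 0
          * chi2v g S R
        = fromBlocks 0 (1 : Matrix (Fin α × Fin k) (Fin α × Fin k) ℂ) (-1) 0) := by
  have hX := chi2v_transpose_mul_J_mul hg hE hE'
  refine ⟨mul_eq_one_comm.mp ?_, fun hS hR => by rwa [hS, hR] at hX⟩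
  rw [Matrix.mul_assoc, Matrix.mul_assoc, ← Matrix.mul_assoc _ (fromBlocks _ _ _ _), hX,
    nonsing_inv_mul _ isUnit_det_fromBlocks_zero_one_neg_one]
end
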